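/- arXiv:2512.13669 — 6 statements merged into one kernel-verified Lean document; each statement's English description precedes it below -/
import Mathlib

section
/- Let W be a convex subset of a real normed vector space, let (Ω, F, P) be a probability space, let X and Y be random variables on Ω taking values in W, let R be a random variable taking values in [0,∞), and let A be a Borel subset of W. Then |P[X ∈ A] − P[Y ∈ A]| ≤ P[ dist(X, ∂A) < R and dist(Y, ∂A) < R ] + P[ ‖X − Y‖ ≥ R ]. -/
/-!
If `X ω ∈ A` but `Y ω ∉ A`, the segment from `X ω` to `Y ω` lies in the convex set `W` and is
connected, so it meets the relative boundary of `A`; a point of the segment is no farther from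
either end than `‖X ω - Y ω‖`. Hence on the symmetric difference of the events `X ∈ A` and
`Y ∈ A`, either both distances to the boundary are below `R`, or `R ≤ ‖X - Y‖`.
-/

open MeasureTheory Set Metric
open scoped Convex

def relFrontier {α : Type*} [TopologicalSpace α] (W A : Set α) : Set α :=
  W ∩ closure A ∩ closure (W \ A)

theorem Convex.segment_inter_relFrontier_nonempty {E : Type*} [AddCommGroup E] [Module ℝ E]
    [TopologicalSpace E] [IsTopologicalAddGroup E] [ContinuousSMul ℝ E] {W A : Set E}
    (hW : Convex ℝ W) {x y : E} (hx : x ∈ W) (hy : y ∈ W) (hxA : x ∈ A) (hyA : y ∉ A) :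
    ([x -[ℝ] y] ∩ relFrontier W A).Nonempty := by
  have hseg : [x -[ℝ] y] ⊆ W := hW.segment_subset hx hy
  have hcover : [x -[ℝ] y] ⊆ closure A ∪ closure (W \ A) := fun z hz =>
    (em (z ∈ A)).imp (fun h => subset_closure h) fun h => subset_closure ⟨hseg hz, h⟩
  obtain ⟨z, hz, hzA, hzA'⟩ := isPreconnected_closed_iff.1 (convex_segment x y).isPreconnected
    _ _ isClosed_closure isClosed_closure hcover
    ⟨x, left_mem_segment ℝ x y, subset_closure hxA⟩
    ⟨y, right_mem_segment ℝ x y, subset_closure ⟨hy, hyA⟩⟩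
  exact ⟨z, hz, ⟨hseg hz, hzA⟩, hzA'⟩

theorem Convex.infDist_relFrontier_le_dist {E : Type*} [SeminormedAddCommGroup E]
    [NormedSpace ℝ E] {W A : Set E} (hW : Convex ℝ W) {x y : E} (hx : x ∈ W) (hy : y ∈ W)
    (hxA : x ∈ A) (hyA : y ∉ A) :
    infDist x (relFrontier W A) ≤ dist x y ∧ infDist y (relFrontier W A) ≤ dist x y := by
  obtain ⟨z, hzseg, hz⟩ := hW.segment_inter_relFrontier_nonempty hx hy hxA hyA
  have hsum := dist_add_dist_of_mem_segment hzseg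
  constructor
  · linarith [infDist_le_dist_of_mem hz (x := x), dist_nonneg (x := z) (y := y)]
  · linarith [infDist_le_dist_of_mem hz (x := y), dist_nonneg (x := x) (y := z),
      dist_comm y z]

theorem MeasureTheory.abs_measureReal_sub_le_of_symmDiff_subset {α : Type*}
    [MeasurableSpace α] {μ : Measure α} [IsFiniteMeasure μ] {s t u : Set α}
    (h : symmDiff s t ⊆ u) : |μ.real s - μ.real t| ≤ μ.real u := by
  rw [abs_sub_le_iff]
  exact ⟨(le_measureReal_sdiff (μ := μ)).trans (measureReal_mono (subset_union_left.trans h)),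
    (le_measureReal_sdiff (μ := μ)).trans (measureReal_mono (subset_union_right.trans h))⟩

/- The relative boundary of `A` in the subspace topology of `W` is
`W ∩ closure A ∩ closure (W \ A)`; `dist(w, ∂A)` is `Metric.infDist`. -/
theorem stmt_2_general {V : Type*} [NormedAddCommGroup V] [NormedSpace ℝ V]
    {W : Set V} (hW : Convex ℝ W)
    {Ω : Type*} [MeasurableSpace Ω] (P : Measure Ω) [IsProbabilityMeasure P]
    (X Y : Ω → V) (R : Ω → ℝ)
    (hXW : ∀ ω, X ω ∈ W) (hYW : ∀ ω, Y ω ∈ W)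
    (A : Set V) :
    |(P {ω | X ω ∈ A}).toReal - (P {ω | Y ω ∈ A}).toReal| ≤
      (P {ω | Metric.infDist (X ω) (W ∩ closure A ∩ closure (W \ A)) < R ω ∧
              Metric.infDist (Y ω) (W ∩ closure A ∩ closure (W \ A)) < R ω}).toReal +
      (P {ω | R ω ≤ ‖X ω - Y ω‖}).toReal := by
  set E₁ := {ω | infDist (X ω) (relFrontier W A) < R ω ∧ infDist (Y ω) (relFrontier W A) < R ω}
  set E₂ := {ω | R ω ≤ ‖X ω - Y ω‖}
  have hsub : symmDiff {ω | X ω ∈ A} {ω | Y ω ∈ A} ⊆ E₁ ∪ E₂ := by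
    intro ω hω
    refine (le_or_gt (R ω) ‖X ω - Y ω‖).symm.imp (fun hlt => ?_) id
    rw [← dist_eq_norm] at hlt
    rcases hω with ⟨hXA, hYA⟩ | ⟨hYA, hXA⟩
    · obtain ⟨hX, hY⟩ := hW.infDist_relFrontier_le_dist (hXW ω) (hYW ω) hXA hYA
      exact ⟨hX.trans_lt hlt, hY.trans_lt hlt⟩
    · obtain ⟨hY, hX⟩ := hW.infDist_relFrontier_le_dist (hYW ω) (hXW ω) hYA hXA
      rw [dist_comm] at hX hY
      exact ⟨hX.trans_lt hlt, hY.trans_lt hlt⟩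
  exact (abs_measureReal_sub_le_of_symmDiff_subset hsub).trans (measureReal_union_le E₁ E₂)

theorem stmt_2 {V : Type*} [NormedAddCommGroup V] [NormedSpace ℝ V]
    [MeasurableSpace V] [BorelSpace V]
    {W : Set V} (hW : Convex ℝ W)
    {Ω : Type*} [MeasurableSpace Ω] (P : Measure Ω) [IsProbabilityMeasure P]
    (X Y : Ω → V) (R : Ω → ℝ)
    (hX : Measurable X) (hY : Measurable Y) (hR : Measurable R)
    (hXW : ∀ ω, X ω ∈ W) (hYW : ∀ ω, Y ω ∈ W) (hR0 : ∀ ω, 0 ≤ R ω)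
    (A : Set V) (hAW : A ⊆ W) (hA : MeasurableSet A) :
    |(P {ω | X ω ∈ A}).toReal - (P {ω | Y ω ∈ A}).toReal| ≤
      (P {ω | Metric.infDist (X ω) (W ∩ closure A ∩ closure (W \ A)) < R ω ∧
              Metric.infDist (Y ω) (W ∩ closure A ∩ closure (W \ A)) < R ω}).toReal +
      (P {ω | R ω ≤ ‖X ω - Y ω‖}).toReal :=
  stmt_2_general hW P X Y R hXW hYW A
end

section
/- Let W be a convex subset of a real normed vector space, and let A ⊆ W be such that both A and W ∖ A are nonempty. Then for every z ∈ W, dist(z, ∂A) = max{ dist(z, A), dist(z, W ∖ A) }, where dist(z, S) := inf_{s ∈ S} ‖z − s‖ for a nonempty set S. -/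
lemma key_bd {V : Type*} [NormedAddCommGroup V] [NormedSpace ℝ V]
    {W B : Set V} (hW : Convex ℝ W) (hBW : B ⊆ W) {z w : V}
    (hz : z ∈ B) (hw : w ∈ W \ B) :
    ∃ p ∈ W ∩ closure B ∩ closure (W \ B), dist z p ≤ dist z w := by
  set f : ℝ → V := fun t => z + t • (w - z) with hf_def
  have hf : Continuous f := by fun_prop
  have hfW : ∀ t ∈ Set.Icc (0:ℝ) 1, f t ∈ W := by
    intro t ht
    have h := hW (hBW hz) hw.1 (by linarith [ht.2] : (0:ℝ) ≤ 1 - t) ht.1 (by ring)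
    have : f t = (1 - t) • z + t • w := by
      simp only [hf_def, smul_sub, sub_smul, one_smul]; abel
    rw [this]; exact h
  set T : Set ℝ := {t ∈ Set.Icc (0:ℝ) 1 | f t ∈ B} with hT_def
  have hT0 : (0:ℝ) ∈ T := by
    constructor
    · exact ⟨le_refl 0, zero_le_one⟩
    · show f 0 ∈ B; simp [hf_def, hz]
  have hTne : T.Nonempty := ⟨0, hT0⟩
  have hTbdd : BddAbove T := ⟨1, fun t ht => ht.1.2⟩
  set t0 := sSup T with ht0_def
  have ht0_mem : t0 ∈ Set.Icc (0:ℝ) 1 :=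
    ⟨le_csSup hTbdd hT0, csSup_le hTne fun t ht => ht.1.2⟩
  have ht0W : f t0 ∈ W := hfW t0 ht0_mem
  have ht0clT : t0 ∈ closure T := csSup_mem_closure hTne hTbdd
  have ht0clB : f t0 ∈ closure B := by
    have h1 : f t0 ∈ closure (f '' T) :=
      mem_closure_image hf.continuousAt ht0clT
    refine closure_mono ?_ h1
    rintro x ⟨t, ht, rfl⟩; exact ht.2
  have ht0clC : f t0 ∈ closure (W \ B) := by
    rcases eq_or_lt_of_le ht0_mem.2 with h1 | h1
    · have : f t0 = w := by simp [hf_def, h1]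
      rw [this]; exact subset_closure hw
    · have hsub : f '' Set.Ioc t0 1 ⊆ W \ B := by
        rintro x ⟨t, ht, rfl⟩
        have htI : t ∈ Set.Icc (0:ℝ) 1 := ⟨le_trans ht0_mem.1 ht.1.le, ht.2⟩
        refine ⟨hfW t htI, fun hB => ?_⟩
        exact absurd (le_csSup hTbdd ⟨htI, hB⟩) (not_le.mpr ht.1)
      have h2 : t0 ∈ closure (Set.Ioc t0 1) := by
        rw [closure_Ioc (ne_of_lt h1)]; exact ⟨le_refl _, ht0_mem.2⟩
      exact closure_mono hsub (mem_closure_image hf.continuousAt h2)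
  refine ⟨f t0, ⟨⟨ht0W, ht0clB⟩, ht0clC⟩, ?_⟩
  have : dist z (f t0) = t0 * dist z w := by
    simp only [hf_def, dist_eq_norm]
    rw [show z - (z + t0 • (w - z)) = t0 • (z - w) by module]
    rw [norm_smul, Real.norm_of_nonneg ht0_mem.1]
  rw [this]
  calc t0 * dist z w ≤ 1 * dist z w := by
        apply mul_le_mul_of_nonneg_right ht0_mem.2 dist_nonneg
    _ = dist z w := one_mul _

/- The relative boundary of `A` in the subspace topology of `W` is
`W ∩ closure A ∩ closure (W \ A)`; `dist(z, S)` is `Metric.infDist`. -/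
theorem stmt_4 {V : Type*} [NormedAddCommGroup V] [NormedSpace ℝ V]
    {W : Set V} (hW : Convex ℝ W) (A : Set V) (hAW : A ⊆ W)
    (hA : A.Nonempty) (hA' : (W \ A).Nonempty) (z : V) (hz : z ∈ W) :
    Metric.infDist z (W ∩ closure A ∩ closure (W \ A)) =
      max (Metric.infDist z A) (Metric.infDist z (W \ A)) := by
  set D := W ∩ closure A ∩ closure (W \ A) with hD_def
  have hDne : D.Nonempty := by
    obtain ⟨a, ha⟩ := hA
    obtain ⟨b, hb⟩ := hA'
    obtain ⟨p, hp, _⟩ := key_bd hW hAW ha hb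
    exact ⟨p, hp⟩
  apply le_antisymm
  · -- infDist z D ≤ max
    have hcompl : W \ (W \ A) = A := Set.diff_diff_cancel_left hAW
    by_cases hzA : z ∈ A
    · -- max = infDist z (W \ A)
      rw [Metric.infDist_zero_of_mem hzA, max_eq_right Metric.infDist_nonneg]
      by_contra h
      push_neg at h
      obtain ⟨w, hw, hwlt⟩ := (Metric.infDist_lt_iff hA').mp h
      obtain ⟨p, hp, hdist⟩ := key_bd hW hAW hzA hw
      exact absurd (Metric.infDist_le_dist_of_mem hp)
        (not_le.mpr (lt_of_le_of_lt hdist hwlt))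
    · have hzA' : z ∈ W \ A := ⟨hz, hzA⟩
      rw [Metric.infDist_zero_of_mem hzA', max_eq_left Metric.infDist_nonneg]
      by_contra h
      push_neg at h
      obtain ⟨w, hw, hwlt⟩ := (Metric.infDist_lt_iff hA).mp h
      have hw' : w ∈ W \ (W \ A) := by rw [hcompl]; exact hw
      obtain ⟨p, hp, hdist⟩ := key_bd hW Set.diff_subset hzA' hw'
      have hpD : p ∈ D := by
        rw [hcompl] at hp
        exact ⟨⟨hp.1.1, hp.2⟩, hp.1.2⟩
      exact absurd (Metric.infDist_le_dist_of_mem hpD)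
        (not_le.mpr (lt_of_le_of_lt hdist hwlt))
  · -- max ≤ infDist z D
    apply max_le
    · calc Metric.infDist z A = Metric.infDist z (closure A) :=
            (Metric.infDist_closure).symm
        _ ≤ Metric.infDist z D := by
            apply Metric.infDist_le_infDist_of_subset _ hDne
            intro x hx; exact hx.1.2
    · calc Metric.infDist z (W \ A) = Metric.infDist z (closure (W \ A)) :=
            (Metric.infDist_closure).symm
        _ ≤ Metric.infDist z D := by
            apply Metric.infDist_le_infDist_of_subset _ hDne
            intro x hx; exact hx.2
end

section
/- Let 0 ≤ u < v ≤ 1, let k := ⌊1/(v−u)⌋, and let π_k : Δ → ℝ^k be the projection π_k(x) := (x₁,…,x_k). Then the polytopes P_{u,v}(ℰ), as ℰ ranges over all families of subsets of {1,…,k}, are pairwise disjoint, and Δ* ∖ D(u,v) = Δ* ∩ π_k^{−1}( ⋃_ℰ P_{u,v}(ℰ) ), where the union runs over all families ℰ of subsets of {1,…,k}. -/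
noncomputable section

/-- The space `ℓ¹(ℝ)` of real sequences with summable absolute values. -/
abbrev ellone : Type := lp (fun _ : ℕ => ℝ) 1

/-- The set `Δ` of nonincreasing nonnegative sequences of `ℓ¹`-norm at most `1`.
(Sequences are indexed from `0` in Lean, so `x i` is the paper's `x_{i+1}`.) -/
def deltaSet : Set ellone := {x | (∀ i : ℕ, x (i + 1) ≤ x i) ∧ (∀ i : ℕ, 0 ≤ x i) ∧ ‖x‖ ≤ 1}

/-- The set `Δ*` of elements of `Δ` with `ℓ¹`-norm exactly `1`. -/
def deltaStar : Set ellone := {x ∈ deltaSet | ‖x‖ = 1}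

/-- `φ_E(x) = ∑_{i ∈ E} x_i`. -/
def phi (E : Set ℕ) (x : ellone) : ℝ := ∑' i : E, x i

/-- `D(u, v)`: elements of `Δ` having a subsum in the open interval `(u, v)`. -/
def Dset (u v : ℝ) : Set ellone := {x ∈ deltaSet | ∃ E : Set ℕ, phi E x ∈ Set.Ioo u v}

/-- The simplex `Δᵏ` of nonincreasing nonnegative vectors with coordinate sum at most `1`. -/
def simplexSet (k : ℕ) : Set (Fin k → ℝ) :=
  {x | (∀ i j : Fin k, i ≤ j → x j ≤ x i) ∧ (∀ i, 0 ≤ x i) ∧ ∑ i, x i ≤ 1}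

/-- The polytope `P_{u,v}(ℰ)`. -/
def Puv (u v : ℝ) {k : ℕ} (ℰ : Finset (Finset (Fin k))) : Set (Fin k → ℝ) :=
  {x | x ∈ simplexSet k ∧ ∀ E : Finset (Fin k),
    (E ∈ ℰ → v ≤ ∑ i ∈ E, x i) ∧ (E ∉ ℰ → 1 - u ≤ ∑ i ∈ Eᶜ, x i)}

/-- The projection `π_k` onto the first `k` coordinates. -/
def projk (k : ℕ) (x : ellone) : Fin k → ℝ := fun i => x i

/-!
Write `T = ∑_{i ≥ k} x_i` for the tail of `x ∈ Δ*`. Every tail coordinate is at most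
`1/(k+1) < v - u`, so a subsum that is at most `u` can absorb the tail one coordinate at a time
without ever jumping over the gap `(u, v)`. Conversely each subsum `φ_E(x)` lies between its head
part `∑_{i ∈ E, i < k} x_i` and that head part plus `T`. Hence `x ∉ D(u, v)` exactly when every head
subsum `∑_{i ∈ F} x_i` is either `≥ v` or satisfies `∑_{i ∈ F} x_i + T ≤ u`, i.e.
`∑_{i ∉ F} x_i ≥ 1 - u`; these are the defining inequalities of `P_{u,v}(ℰ)` for `ℰ` the family of
sets of the first kind. Disjointness holds because `v ≤ ∑_{i ∈ E} y_i` and `1 - u ≤ ∑_{i ∉ E} y_i`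
would force `∑ y_i > 1`.
-/

lemma add_tsum_le_of_forall_notMem_Ioo {u v a : ℝ} {f : ℕ → ℝ} (hf : Summable f) (ha : a ≤ u)
    (hsmall : ∀ n, f n < v - u) (hgap : ∀ n, a + ∑ i ∈ Finset.range n, f i ∉ Set.Ioo u v) :
    a + ∑' n, f n ≤ u := by
  have hpartial : ∀ n, a + ∑ i ∈ Finset.range n, f i ≤ u := by
    intro n
    induction n with
    | zero => simpa using ha
    | succ n ih =>
      have hlt : a + ∑ i ∈ Finset.range (n + 1), f i < v := by
        rw [Finset.sum_range_succ]
        linarith [hsmall n]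
      by_contra! hgt
      exact hgap (n + 1) ⟨hgt, hlt⟩
  exact le_of_tendsto' (hf.hasSum.tendsto_sum_nat.const_add a) hpartial

lemma one_div_floor_one_div_add_one_lt {d : ℝ} (hd : 0 < d) : 1 / ((⌊1 / d⌋₊ : ℝ) + 1) < d := by
  rw [div_lt_iff₀ (by positivity), ← div_lt_iff₀' hd]
  exact Nat.lt_floor_add_one _

section Phi

variable {x : ellone}

lemma summable_ellone (x : ellone) : Summable fun i => x i :=
  (lp.memℓp x).summable_of_one

lemma norm_eq_tsum_of_nonneg (h0 : ∀ i, 0 ≤ x i) : ‖x‖ = ∑' i, x i := by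
  rw [lp.norm_eq_tsum_rpow (by norm_num) x]
  simp [Real.norm_eq_abs, abs_of_nonneg (h0 _)]

lemma phi_coe_finset (x : ellone) (F : Finset ℕ) : phi ↑F x = ∑ i ∈ F, x i :=
  Finset.tsum_subtype' F (fun i => x i)

lemma phi_map_valEmbedding {k : ℕ} (x : ellone) (F : Finset (Fin k)) :
    phi ↑(F.map Fin.valEmbedding) x = ∑ i ∈ F, projk k x i := by
  rw [phi_coe_finset, Finset.sum_map]
  rfl

lemma phi_Ici (x : ellone) (k : ℕ) : phi (Set.Ici k) x = ∑' i, x (i + k) := by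
  rw [phi, ← Equiv.tsum_eq
    (⟨fun n => ⟨n + k, by simp⟩, fun m => m.1 - k, fun n => by simp,
      fun m => Subtype.ext (Nat.sub_add_cancel (Set.mem_Ici.mp m.2))⟩ :
      ℕ ≃ (Set.Ici k : Set ℕ)) (fun m : (Set.Ici k : Set ℕ) => x ↑m)]
  rfl

lemma phi_union (x : ellone) {A B : Set ℕ} (h : Disjoint A B) :
    phi (A ∪ B) x = phi A x + phi B x :=
  Summable.tsum_union_disjoint h ((summable_ellone x).subtype A) ((summable_ellone x).subtype B)

lemma phi_nonneg (h0 : ∀ i, 0 ≤ x i) (E : Set ℕ) : 0 ≤ phi E x :=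
  tsum_nonneg fun i => h0 i

lemma phi_mono (h0 : ∀ i, 0 ≤ x i) {A B : Set ℕ} (h : A ⊆ B) : phi A x ≤ phi B x := by
  have hsum := summable_ellone x
  rw [phi, phi, tsum_subtype, tsum_subtype]
  exact (hsum.indicator A).tsum_le_tsum (Set.indicator_le_indicator_of_subset h h0)
    (hsum.indicator B)

lemma sum_projk_add_phi_Ici (h0 : ∀ i, 0 ≤ x i) (k : ℕ) :
    ∑ i, projk k x i + phi (Set.Ici k) x = ‖x‖ := by
  rw [norm_eq_tsum_of_nonneg h0, phi_Ici, ← (summable_ellone x).sum_add_tsum_nat_add k]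
  congr 1
  exact Fin.sum_univ_eq_sum_range (fun i => x i) k

lemma phi_mem_Icc (h0 : ∀ i, 0 ≤ x i) {k : ℕ} {E : Set ℕ} {F : Finset (Fin k)}
    (hF : ∀ i, i ∈ F ↔ ↑i ∈ E) :
    phi E x ∈ Set.Icc (∑ i ∈ F, projk k x i) (∑ i ∈ F, projk k x i + phi (Set.Ici k) x) := by
  have hsplit : E = ↑(F.map Fin.valEmbedding) ∪ (E ∩ Set.Ici k) := by
    ext n
    simp only [Finset.coe_map, Fin.valEmbedding_apply, Set.mem_union, Set.mem_image,
      Finset.mem_coe, hF, Set.mem_inter_iff, Set.mem_Ici]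
    constructor
    · intro hn
      by_cases hnk : n < k
      · exact Or.inl ⟨⟨n, hnk⟩, hn, rfl⟩
      · exact Or.inr ⟨hn, not_lt.1 hnk⟩
    · rintro (⟨i, hi, rfl⟩ | ⟨hn, -⟩) <;> assumption
  have hdisj : Disjoint (↑(F.map Fin.valEmbedding) : Set ℕ) (E ∩ Set.Ici k) := by
    rw [Set.disjoint_left]
    simp
  have hphi : phi E x = ∑ i ∈ F, projk k x i + phi (E ∩ Set.Ici k) x := by
    rw [← phi_map_valEmbedding, ← phi_union x hdisj, ← hsplit]
  rw [hphi]
  exact ⟨le_add_of_nonneg_right (phi_nonneg h0 _),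
    add_le_add_right (phi_mono h0 Set.inter_subset_right) _⟩

end Phi

section Delta

variable {x : ellone}

lemma le_one_div_of_mem_deltaSet (hx : x ∈ deltaSet) {k i : ℕ} (hki : k ≤ i) :
    x i ≤ 1 / (k + 1) := by
  obtain ⟨hmono, h0, hnorm⟩ := hx
  have hanti : Antitone fun i => x i := antitone_nat_of_succ_le hmono
  have hhead : ((k : ℝ) + 1) * x k ≤ ∑ j ∈ Finset.range (k + 1), x j := by
    simpa [add_comm] using Finset.card_nsmul_le_sum (Finset.range (k + 1)) (fun j => x j) (x k)
      fun j hj => hanti (Nat.lt_succ_iff.mp (Finset.mem_range.mp hj))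
  have hsum : ∑ j ∈ Finset.range (k + 1), x j ≤ 1 := calc
    _ ≤ ∑' j, x j := (summable_ellone x).sum_le_tsum _ fun j _ => h0 j
    _ = ‖x‖ := (norm_eq_tsum_of_nonneg h0).symm
    _ ≤ 1 := hnorm
  rw [le_div_iff₀ (by positivity), mul_comm]
  exact (mul_le_mul_of_nonneg_left (hanti hki) (by positivity)).trans (hhead.trans hsum)

lemma projk_mem_simplexSet (hx : x ∈ deltaSet) (k : ℕ) : projk k x ∈ simplexSet k := by
  obtain ⟨hmono, h0, hnorm⟩ := hx
  refine ⟨fun i j hij => antitone_nat_of_succ_le hmono hij, fun i => h0 i, ?_⟩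
  linarith [sum_projk_add_phi_Ici h0 k, phi_nonneg h0 (Set.Ici k)]

lemma projk_mem_Puv_iff (hx : x ∈ deltaStar) {u v : ℝ} {k : ℕ} (ℰ : Finset (Finset (Fin k))) :
    projk k x ∈ Puv u v ℰ ↔ ∀ F : Finset (Fin k), (F ∈ ℰ → v ≤ ∑ i ∈ F, projk k x i) ∧
      (F ∉ ℰ → ∑ i ∈ F, projk k x i + phi (Set.Ici k) x ≤ u) := by
  have htotal : ∑ i, projk k x i + phi (Set.Ici k) x = 1 :=
    (sum_projk_add_phi_Ici hx.1.2.1 k).trans hx.2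
  have hcompl (F : Finset (Fin k)) :
      1 - u ≤ ∑ i ∈ Fᶜ, projk k x i ↔ ∑ i ∈ F, projk k x i + phi (Set.Ici k) x ≤ u := by
    rw [← Finset.sum_add_sum_compl F] at htotal
    constructor <;> intro h <;> linarith
  simp only [Puv, Set.mem_ofPred_eq, projk_mem_simplexSet hx.1, true_and, hcompl]

lemma exists_projk_mem_Puv_iff (hx : x ∈ deltaStar) {u v : ℝ} {k : ℕ} :
    (∃ ℰ, projk k x ∈ Puv u v ℰ) ↔ ∀ F : Finset (Fin k),
      v ≤ ∑ i ∈ F, projk k x i ∨ ∑ i ∈ F, projk k x i + phi (Set.Ici k) x ≤ u := by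
  classical
  simp only [projk_mem_Puv_iff hx]
  constructor
  · rintro ⟨ℰ, hℰ⟩ F
    by_cases hF : F ∈ ℰ
    · exact Or.inl ((hℰ F).1 hF)
    · exact Or.inr ((hℰ F).2 hF)
  · intro h
    refine ⟨Finset.univ.filter fun F => v ≤ ∑ i ∈ F, projk k x i, fun F => ⟨?_, ?_⟩⟩
    · exact fun hF => (Finset.mem_filter.1 hF).2
    · exact fun hF => (h F).resolve_left fun hv => hF (Finset.mem_filter.2 ⟨Finset.mem_univ F, hv⟩)

end Delta

section Gap

variable {x : ellone} {u v : ℝ} {k : ℕ}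

lemma sum_add_phi_Ici_le_of_notMem_Dset (hx : x ∈ deltaSet) (hD : x ∉ Dset u v)
    (hsmall : ∀ i, k ≤ i → x i < v - u) {F : Finset (Fin k)} (hF : ∑ i ∈ F, projk k x i < v) :
    ∑ i ∈ F, projk k x i + phi (Set.Ici k) x ≤ u := by
  have hgap (E : Set ℕ) : phi E x ∉ Set.Ioo u v := fun hE => hD ⟨hx, E, hE⟩
  have hhead : ∑ i ∈ F, projk k x i ≤ u := by
    by_contra! hu
    exact hgap _ (by rw [phi_map_valEmbedding]; exact ⟨hu, hF⟩)
  rw [phi_Ici]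
  refine add_tsum_le_of_forall_notMem_Ioo ((summable_nat_add_iff k).2 (summable_ellone x)) hhead
    (fun n => hsmall _ (Nat.le_add_left k n)) fun n => ?_
  have hdisj : Disjoint (F.map Fin.valEmbedding) ((Finset.range n).map (addRightEmbedding k)) := by
    simp only [Finset.disjoint_left, Finset.mem_map, Fin.valEmbedding_apply, Finset.mem_range,
      addRightEmbedding_apply]
    rintro _ ⟨i, -, rfl⟩ ⟨j, -, hj⟩
    omega
  have hphi : phi ↑(F.map Fin.valEmbedding ∪ (Finset.range n).map (addRightEmbedding k)) x =
      ∑ i ∈ F, projk k x i + ∑ i ∈ Finset.range n, x (i + k) := by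
    rw [phi_coe_finset, Finset.sum_union hdisj, ← phi_coe_finset, phi_map_valEmbedding,
      Finset.sum_map]
    rfl
  exact hphi ▸ hgap _

lemma notMem_Dset_iff (hx : x ∈ deltaSet) (hsmall : ∀ i, k ≤ i → x i < v - u) :
    x ∉ Dset u v ↔ ∀ F : Finset (Fin k),
      v ≤ ∑ i ∈ F, projk k x i ∨ ∑ i ∈ F, projk k x i + phi (Set.Ici k) x ≤ u := by
  classical
  constructor
  · intro hD F
    exact (le_or_gt v _).imp_right (sum_add_phi_Ici_le_of_notMem_Dset hx hD hsmall)
  · rintro h ⟨-, E, huE, hEv⟩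
    let F : Finset (Fin k) := Finset.univ.filter fun i => ↑i ∈ E
    obtain ⟨hlow, hhigh⟩ := phi_mem_Icc hx.2.1 (E := E) (F := F) (by simp [F])
    rcases h F with hv | hu <;> linarith

end Gap

lemma mem_of_mem_Puv {u v : ℝ} (huv : u < v) {k : ℕ} {ℰ ℰ' : Finset (Finset (Fin k))}
    {y : Fin k → ℝ} (hy : y ∈ Puv u v ℰ) (hy' : y ∈ Puv u v ℰ') {E : Finset (Fin k)}
    (hE : E ∈ ℰ) : E ∈ ℰ' := by
  by_contra hE'
  have hv := (hy.2 E).1 hE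
  have hu := (hy'.2 E).2 hE'
  have htotal := Finset.sum_add_sum_compl E y
  linarith [hy.1.2.2]

lemma Puv_disjoint {u v : ℝ} (huv : u < v) {k : ℕ} {ℰ₁ ℰ₂ : Finset (Finset (Fin k))}
    (hne : ℰ₁ ≠ ℰ₂) : Disjoint (Puv u v ℰ₁) (Puv u v ℰ₂) :=
  Set.disjoint_left.2 fun _ h₁ h₂ =>
    hne (Finset.ext fun _ => ⟨mem_of_mem_Puv huv h₁ h₂, mem_of_mem_Puv huv h₂ h₁⟩)

theorem stmt_5_general (u v : ℝ) (huv : u < v)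
    (k : ℕ) (hk : k = ⌊1 / (v - u)⌋₊) :
    (∀ ℰ₁ ℰ₂ : Finset (Finset (Fin k)), ℰ₁ ≠ ℰ₂ → Disjoint (Puv u v ℰ₁) (Puv u v ℰ₂)) ∧
      deltaStar \ Dset u v =
        deltaStar ∩ projk k ⁻¹' (⋃ ℰ : Finset (Finset (Fin k)), Puv u v ℰ) := by
  refine ⟨fun _ _ => Puv_disjoint huv, Set.ext fun x => ?_⟩
  by_cases hx : x ∈ deltaStar
  · have hsmall (i : ℕ) (hi : k ≤ i) : x i < v - u :=
      (le_one_div_of_mem_deltaSet hx.1 hi).trans_lt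
        (hk ▸ one_div_floor_one_div_add_one_lt (sub_pos.2 huv))
    simp only [Set.mem_sdiff, Set.mem_inter_iff, Set.mem_preimage, Set.mem_iUnion, hx, true_and]
    rw [notMem_Dset_iff hx.1 hsmall, exists_projk_mem_Puv_iff hx]
  · simp [hx]

theorem stmt_5 (u v : ℝ) (hu : 0 ≤ u) (huv : u < v) (hv : v ≤ 1)
    (k : ℕ) (hk : k = ⌊1 / (v - u)⌋₊) :
    (∀ ℰ₁ ℰ₂ : Finset (Finset (Fin k)), ℰ₁ ≠ ℰ₂ → Disjoint (Puv u v ℰ₁) (Puv u v ℰ₂)) ∧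
      deltaStar \ Dset u v =
        deltaStar ∩ projk k ⁻¹' (⋃ ℰ : Finset (Finset (Fin k)), Puv u v ℰ) :=
  stmt_5_general u v huv k hk
end
end

section
/- Let 0 ≤ u < v ≤ 1 and k := ⌊1/(v−u)⌋. Then for every subset E ⊆ ℕ, (Δ ∖ D(u,v)) ∩ {x ∈ Δ : φ_E(x) ≥ v} = (Δ ∖ D(u,v)) ∩ {x ∈ Δ : φ_{E ∩ [1,k]}(x) ≥ v}. -/
noncomputable section

open Filter Finset

lemma ellone_summable (x : ellone) : Summable fun i : ℕ => ‖x i‖ := by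
  have := (lp.memℓp x).summable (by norm_num : (0:ℝ) < (1 : ENNReal).toReal)
  simpa using this

lemma phi_eq_partial (E : Set ℕ) (x : ellone) (N : ℕ) :
    phi (E ∩ {i | i < N}) x = ∑ i ∈ Finset.range N, Set.indicator E (fun i => x i) i := by
  classical
  rw [phi, _root_.tsum_subtype]
  rw [tsum_eq_sum (s := Finset.range N)]
  · refine Finset.sum_congr rfl fun i hi => ?_
    simp only [Finset.mem_range] at hi
    by_cases h : i ∈ E <;>
      simp [Set.indicator_apply, Set.mem_inter_iff, h, hi, Set.mem_setOf_eq]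
  · intro i hi
    simp only [Finset.mem_range, not_lt] at hi
    exact Set.indicator_of_notMem (fun hc => absurd hc.2 (by simpa using hi)) _

/- Since sequences are indexed from `0` in Lean, the paper's `E ∩ [1, k]` corresponds to
`E ∩ {i | i < k}`. -/
theorem stmt_6 (u v : ℝ) (hu : 0 ≤ u) (huv : u < v) (hv : v ≤ 1)
    (k : ℕ) (hk : k = ⌊1 / (v - u)⌋₊) (E : Set ℕ) :
    (deltaSet \ Dset u v) ∩ {x ∈ deltaSet | v ≤ phi E x} =
      (deltaSet \ Dset u v) ∩ {x ∈ deltaSet | v ≤ phi (E ∩ {i | i < k}) x} := by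
  classical
  ext x
  simp only [Set.mem_inter_iff, Set.mem_diff, Set.mem_setOf_eq, and_congr_right_iff]
  rintro ⟨hxΔ, hxD⟩ _
  obtain ⟨hmono, hnn, hnorm⟩ := hxΔ
  have hsum : Summable fun i : ℕ => x i := (ellone_summable x).of_norm
  set g : ℕ → ℝ := Set.indicator E (fun i => x i) with hg
  have hsumE : Summable g := hsum.indicator E
  have havoid : ∀ S : Set ℕ, phi S x ∉ Set.Ioo u v := by
    intro S hS
    exact hxD ⟨⟨hmono, hnn, hnorm⟩, S, hS⟩
  have hEphi : phi E x = ∑' i, g i := _root_.tsum_subtype E _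
  have hlim : Tendsto (fun N => ∑ i ∈ Finset.range N, g i) atTop (nhds (phi E x)) := by
    rw [hEphi]; exact hsumE.hasSum.tendsto_sum_nat
  have hmono' : ∀ a b : ℕ, a ≤ b → x b ≤ x a := by
    intro a b hab
    induction hab with
    | refl => exact le_refl _
    | step h ih => exact le_trans (hmono _) ih
  have hxk : ∀ i, k ≤ i → x i ≤ 1 / (k + 1) := by
    intro i hi
    have h1 : (k + 1 : ℝ) * x k ≤ 1 := by
      calc (k + 1 : ℝ) * x k = ∑ _i ∈ Finset.range (k+1), x k := by
            rw [Finset.sum_const, Finset.card_range]; push_cast; ring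
        _ ≤ ∑ i ∈ Finset.range (k+1), x i :=
            Finset.sum_le_sum fun i hi =>
              hmono' i k (Nat.lt_succ_iff.mp (Finset.mem_range.mp hi))
        _ = ∑ i ∈ Finset.range (k+1), ‖x i‖ :=
            Finset.sum_congr rfl fun i _ => (Real.norm_of_nonneg (hnn i)).symm
        _ ≤ ∑' i, ‖x i‖ :=
            Summable.sum_le_tsum _ (fun i _ => norm_nonneg _) (ellone_summable x)
        _ ≤ 1 := by
            have hh := lp.norm_eq_tsum_rpow (p := 1) (by norm_num) x
            simp only [ENNReal.toReal_one, Real.rpow_one, one_div, inv_one] at hh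
            rw [← hh]; exact hnorm
    have hk1 : (0:ℝ) < k + 1 := by positivity
    calc x i ≤ x k := hmono' k i hi
      _ ≤ 1 / (k + 1) := by rw [le_div_iff₀ hk1]; linarith
  have hgap : 1 / ((k:ℝ) + 1) < v - u := by
    have hvu : (0:ℝ) < v - u := by linarith
    have hk1 : (0:ℝ) < (k:ℝ) + 1 := by positivity
    have h2 := Nat.lt_floor_add_one (1 / (v - u))
    rw [← hk] at h2
    rw [div_lt_iff₀ hvu] at h2
    rw [div_lt_iff₀ hk1]
    nlinarith
  have hgle : ∀ i, g i ≤ x i := fun i =>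
    Set.indicator_le_self' (fun j _ => hnn j) i
  have hgnn : ∀ i, 0 ≤ g i := fun i => Set.indicator_nonneg (fun j _ => hnn j) i
  constructor
  · -- forward
    intro hvE
    by_contra hlt
    push_neg at hlt
    have key : ∀ n : ℕ, ∑ i ∈ Finset.range (k + n), g i ≤ u := by
      intro n
      induction n with
      | zero =>
          have h0 := havoid (E ∩ {i | i < k})
          rw [phi_eq_partial] at h0
          simp only [Set.mem_Ioo, not_and, not_lt] at h0
          rw [phi_eq_partial] at hlt
          by_contra hc
          push_neg at hc
          exact absurd (h0 hc) (not_le.mpr hlt)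
      | succ n ih =>
          have hstep : ∑ i ∈ Finset.range (k + (n+1)), g i
              = ∑ i ∈ Finset.range (k + n), g i + g (k + n) := by
            rw [show k + (n+1) = (k+n) + 1 from rfl, Finset.sum_range_succ]
          have hsmall : g (k + n) ≤ 1 / ((k:ℝ) + 1) :=
            le_trans (hgle _) (hxk _ (Nat.le_add_right _ _))
          have hlt' : ∑ i ∈ Finset.range (k + (n+1)), g i < v := by
            rw [hstep]; linarith
          have h0 := havoid (E ∩ {i | i < k + (n+1)})
          rw [phi_eq_partial] at h0
          simp only [Set.mem_Ioo, not_and, not_lt] at h0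
          by_contra hc
          push_neg at hc
          exact absurd (h0 hc) (not_le.mpr hlt')
    have hle : phi E x ≤ u := by
      refine le_of_tendsto hlim ?_
      filter_upwards [eventually_ge_atTop k] with N hN
      have : N = k + (N - k) := by omega
      rw [this]; exact key _
    linarith
  · -- backward: phi monotone
    intro hvE
    refine le_trans hvE ?_
    rw [hEphi, phi_eq_partial]
    exact Summable.sum_le_tsum _ (fun i _ => hgnn i) hsumE
end
end

section
/- Let u < v be real numbers and η ≥ 0. Then ∂_η D(u,v) ⊆ D(u−η, u+η) ∪ D(v−η, v+η), where ∂_η A := {w ∈ Δ : dist(w, ∂A) < η}, ∂A is the boundary of A in the subspace topology of Δ, and dist(w, ∂A) := inf_{z ∈ ∂A} ‖w − z‖. -/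
noncomputable section

lemma norm_hasSum (f : ellone) : HasSum (fun i => ‖f i‖) ‖f‖ := by
  simpa using lp.hasSum_norm (p := 1) (by norm_num) f

lemma coord_summable (f : ellone) : Summable (fun i => ‖f i‖) := (norm_hasSum f).summable

lemma phi_lipschitz (E : Set ℕ) (a b : ellone) : |phi E a - phi E b| ≤ ‖a - b‖ := by
  have hsa : Summable (fun i : E => a i) :=
    ((coord_summable a).subtype E).of_norm
  have hsb : Summable (fun i : E => b i) :=
    ((coord_summable b).subtype E).of_norm
  have hd : Summable (fun i : E => ‖(a - b : ellone) i‖) := (coord_summable _).subtype E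
  have h1 : phi E a - phi E b = ∑' i : E, ((a - b : ellone) i) := by
    rw [phi, phi, ← Summable.tsum_sub hsa hsb]
    exact tsum_congr fun i => by simp [lp.coeFn_sub, Pi.sub_apply]
  rw [h1]
  calc |∑' i : E, ((a - b : ellone) i)| ≤ ∑' i : E, ‖(a - b : ellone) i‖ := by
        simpa using norm_tsum_le_tsum_norm hd
    _ ≤ ∑' i, ‖(a - b : ellone) i‖ :=
        Summable.tsum_subtype_le (fun i => ‖(a - b : ellone) i‖) E (fun _ => norm_nonneg _)
          (coord_summable _)
    _ = ‖a - b‖ := (norm_hasSum _).tsum_eq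

/- The boundary `∂A` of `A ⊆ Δ` in the subspace topology of `Δ` is
`Δ ∩ closure A ∩ closure (Δ \ A)`, and `∂_η A = {w ∈ Δ : dist(w, ∂A) < η}`. -/
theorem stmt_9 (u v : ℝ) (huv : u < v) (η : ℝ) (hη : 0 ≤ η) :
    {w ∈ deltaSet |
        ∃ z ∈ deltaSet ∩ closure (Dset u v) ∩ closure (deltaSet \ Dset u v), ‖w - z‖ < η} ⊆
      Dset (u - η) (u + η) ∪ Dset (v - η) (v + η) := by
  rintro w ⟨hw, z, ⟨⟨hzΔ, hzD⟩, hzC⟩, hwz⟩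
  -- z has no subsum in (u, v)
  have hz_no : ∀ E : Set ℕ, phi E z ∉ Set.Ioo u v := by
    rintro E ⟨h1, h2⟩
    obtain ⟨y, hy, hdy⟩ := Metric.mem_closure_iff.mp hzC (min (phi E z - u) (v - phi E z))
      (lt_min (by linarith) (by linarith))
    have hlip := phi_lipschitz E y z
    have : ‖y - z‖ < min (phi E z - u) (v - phi E z) := by
      rwa [← dist_eq_norm, dist_comm]
    have habs : |phi E y - phi E z| < min (phi E z - u) (v - phi E z) := lt_of_le_of_lt hlip this
    rw [abs_lt] at habs
    have h3 : phi E y ∈ Set.Ioo u v := by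
      constructor
      · have := habs.1; have := min_le_left (phi E z - u) (v - phi E z); linarith
      · have := habs.2; have := min_le_right (phi E z - u) (v - phi E z); linarith
    exact hy.2 ⟨hy.1, E, h3⟩
  set d := ‖w - z‖ with hd
  have hdη : d < η := hwz
  have hdpos : 0 ≤ d := norm_nonneg _
  set ε := (η - d) / 2 with hε
  have hεpos : 0 < ε := by simp only [hε]; linarith
  -- get E with phi E z in (u - ε, v + ε)
  obtain ⟨x, ⟨hxΔ, E, hxE⟩, hdx⟩ := Metric.mem_closure_iff.mp hzD ε hεpos
  have hlip : |phi E z - phi E x| ≤ ‖z - x‖ := phi_lipschitz E z x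
  have hzx : ‖z - x‖ < ε := by rwa [← dist_eq_norm]
  have habs : |phi E z - phi E x| < ε := lt_of_le_of_lt hlip hzx
  rw [abs_lt] at habs
  have hz1 : u - ε < phi E z := by have := hxE.1; linarith
  have hz2 : phi E z < v + ε := by have := hxE.2; linarith
  have hcase : phi E z ≤ u ∨ v ≤ phi E z := by
    by_contra h
    push_neg at h
    exact hz_no E ⟨h.1, h.2⟩
  have hlipw : |phi E w - phi E z| ≤ d := phi_lipschitz E w z
  rw [abs_le] at hlipw
  rcases hcase with hcu | hcv
  · left
    exact ⟨hw, E, by constructor <;> [skip; skip] <;> simp only [hε] at * <;> linarith⟩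
  · right
    exact ⟨hw, E, by constructor <;> [skip; skip] <;> simp only [hε] at * <;> linarith⟩
end
end

section
/- Let x, y be real numbers with 3 ≤ y ≤ x, let j ≥ 1 be an integer, and let b be a squarefull positive integer. Then the number of integers n with 1 ≤ n ≤ x such that n♯ = b, x/(2^j·b) < n♭ ≤ x/(2^{j−1}·b), and n has a divisor d with y·(2^j·b)^{−5} < d < y·(2^j·b)^{5}, is at most H( x/(2^{j−1}·b), y·(2^j·b)^{−6}, y·(2^j·b)^{5} ). -/
/-- `Hcnt x y z` is the number of integers `n` with `1 ≤ n ≤ x` having a divisor `d`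
with `y < d < z`. -/
noncomputable def Hcnt (x y z : ℝ) : ℕ :=
  {n : ℕ | 1 ≤ n ∧ (n : ℝ) ≤ x ∧ ∃ d : ℕ, d ∣ n ∧ y < (d : ℝ) ∧ (d : ℝ) < z}.ncard

/-- The squarefree part `n♭` of `n`: the product of the primes dividing `n` exactly once. -/
def flatPart (n : ℕ) : ℕ := ∏ p ∈ n.primeFactors.filter (fun p => ¬ p ^ 2 ∣ n), p

/-- The squarefull part `n♯ = n / n♭`, so that `n = n♭ · n♯` with `n♭` squarefree,
`n♯` squarefull and `gcd(n♭, n♯) = 1`. -/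
def sharpPart (n : ℕ) : ℕ := n / flatPart n

/-- A positive integer is squarefull if `p² ∣ n` for every prime `p ∣ n`. -/
def Squarefull (n : ℕ) : Prop := 0 < n ∧ ∀ p : ℕ, p.Prime → p ∣ n → p ^ 2 ∣ n

lemma flatPart_dvd (n : ℕ) : flatPart n ∣ n := by
  have h : flatPart n ∣ ∏ p ∈ n.primeFactors, p :=
    Finset.prod_dvd_prod_of_subset _ _ _ (Finset.filter_subset _ _)
  exact h.trans (Nat.prod_primeFactors_dvd n)

lemma flatPart_pos (n : ℕ) : 0 < flatPart n := by
  apply Finset.prod_pos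
  intro p hp
  exact (Nat.prime_of_mem_primeFactors (Finset.mem_filter.mp hp).1).pos

lemma flat_mul_sharp (n : ℕ) : flatPart n * sharpPart n = n :=
  Nat.mul_div_cancel' (flatPart_dvd n)

lemma coprime_flat_sharp (n : ℕ) : Nat.Coprime (flatPart n) (sharpPart n) := by
  rw [Nat.coprime_iff_gcd_eq_one]
  by_contra hne
  obtain ⟨p, hp, hpd⟩ := Nat.exists_prime_and_dvd hne
  have hpf : p ∣ flatPart n := hpd.trans (Nat.gcd_dvd_left _ _)
  have hps : p ∣ sharpPart n := hpd.trans (Nat.gcd_dvd_right _ _)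
  have hmem : p ∈ n.primeFactors.filter (fun q => ¬ q ^ 2 ∣ n) := by
    obtain ⟨q, hq, hpq⟩ := (hp.prime.dvd_finset_prod_iff _).mp hpf
    have := (Nat.prime_of_mem_primeFactors (Finset.mem_filter.mp hq).1)
    rwa [(Nat.prime_dvd_prime_iff_eq hp this).mp hpq]
  have h2 : p ^ 2 ∣ n := by
    rw [← flat_mul_sharp n, sq]
    exact mul_dvd_mul hpf hps
  exact (Finset.mem_filter.mp hmem).2 h2

theorem stmt_17 (x y : ℝ) (hy : 3 ≤ y) (hyx : y ≤ x)
    (j : ℕ) (hj : 1 ≤ j) (b : ℕ) (hb : Squarefull b) :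
    {n : ℕ | 1 ≤ n ∧ (n : ℝ) ≤ x ∧ sharpPart n = b ∧
        x / (2 ^ j * b) < (flatPart n : ℝ) ∧ (flatPart n : ℝ) ≤ x / (2 ^ (j - 1) * b) ∧
        ∃ d : ℕ, d ∣ n ∧ y * ((2 ^ j * b : ℕ) : ℝ) ^ (-5 : ℤ) < (d : ℝ) ∧
          (d : ℝ) < y * ((2 ^ j * b : ℕ) : ℝ) ^ (5 : ℤ)}.ncard ≤
      Hcnt (x / (2 ^ (j - 1) * b)) (y * ((2 ^ j * b : ℕ) : ℝ) ^ (-6 : ℤ))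
        (y * ((2 ^ j * b : ℕ) : ℝ) ^ (5 : ℤ)) := by
  set X : ℝ := x / (2 ^ (j - 1) * b) with hX
  set B : ℝ := ((2 ^ j * b : ℕ) : ℝ) with hBdef
  have hb1 : 1 ≤ b := hb.1
  have hbR : (1 : ℝ) ≤ (b : ℝ) := by exact_mod_cast hb1
  have h2j : (2:ℕ) ≤ 2 ^ j := Nat.one_lt_two_pow_iff.mpr (by omega)
  have h2jR : (2:ℝ) ≤ 2 ^ j := by exact_mod_cast h2j
  have hB2 : (2 : ℝ) ≤ B := by
    rw [hBdef]; push_cast; nlinarith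
  have hB0 : (0 : ℝ) < B := by linarith
  have hbB : (b : ℝ) ≤ B := by
    rw [hBdef]; push_cast; nlinarith
  have hfin : {n : ℕ | 1 ≤ n ∧ (n : ℝ) ≤ X ∧ ∃ d : ℕ, d ∣ n ∧ y * B ^ (-6 : ℤ) < (d : ℝ) ∧
      (d : ℝ) < y * B ^ (5 : ℤ)}.Finite := by
    apply Set.Finite.subset (Set.finite_Iic (⌊X⌋₊))
    rintro n ⟨_, hnX, _⟩
    exact Set.mem_Iic.mpr (Nat.le_floor hnX)
  apply Set.ncard_le_ncard_of_injOn flatPart ?_ ?_ hfin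
  · rintro n ⟨hn1, hnx, hsharp, hlo, hhi, d, hdn, hd1, hd2⟩
    have hn0 : 0 < n := hn1
    have hd0 : 0 < d := Nat.pos_of_dvd_of_pos hdn hn0
    set f := flatPart n with hf
    set g := Nat.gcd d f with hg
    have hgf : g ∣ f := Nat.gcd_dvd_right _ _
    have hdfs : d ∣ f * sharpPart n := by rw [flat_mul_sharp]; exact hdn
    have hsplit : Nat.gcd d f * Nat.gcd d (sharpPart n) = d :=
      (Nat.gcd_mul_gcd_eq_iff_dvd_mul_of_coprime (coprime_flat_sharp n)).mpr hdfs
    have hgb : Nat.gcd d (sharpPart n) ≤ b := by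
      rw [hsharp]
      exact Nat.le_of_dvd hb.1 (Nat.gcd_dvd_right _ _)
    refine ⟨flatPart_pos n, hhi, g, hgf, ?_, ?_⟩
    · -- y * B^(-6) < g
      have hdgb : (d : ℝ) ≤ (g : ℝ) * b := by
        have : d ≤ g * b := by
          calc d = g * Nat.gcd d (sharpPart n) := hsplit.symm
          _ ≤ g * b := Nat.mul_le_mul_left _ hgb
        exact_mod_cast this
      have h1 : y * B ^ (-6 : ℤ) * B = y * B ^ (-5 : ℤ) := by
        rw [mul_assoc, ← zpow_add_one₀ (ne_of_gt hB0)]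
        norm_num
      have hkey : y * B ^ (-6 : ℤ) * B < (g : ℝ) * B := by
        rw [h1]
        calc y * B ^ (-5:ℤ) < (d:ℝ) := hd1
        _ ≤ (g:ℝ) * b := hdgb
        _ ≤ (g:ℝ) * B := by
          apply mul_le_mul_of_nonneg_left hbB (by positivity)
      exact lt_of_mul_lt_mul_right hkey hB0.le
    · -- g < y * B^5
      have : g ≤ d := Nat.le_of_dvd hd0 (Nat.gcd_dvd_left _ _)
      calc (g : ℝ) ≤ (d : ℝ) := by exact_mod_cast this
      _ < y * B ^ (5:ℤ) := hd2
  · rintro n ⟨_, _, hsn, _, _, _⟩ m ⟨_, _, hsm, _, _, _⟩ hfe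
    have h1 : flatPart n * sharpPart n = flatPart m * sharpPart m := by
      rw [hfe, hsn, hsm]
    rw [flat_mul_sharp, flat_mul_sharp] at h1
    exact h1
end
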